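/- Let S be a proper subtorus of a maximal torus T of G = SL_{n+1}(K), and let W(S) = N_G(S)/C_G(S) viewed as a subgroup of the Weyl group Sym_{n+1} (assuming C_G(S) = T). Then W(S) is not a 2-transitive subgroup of Sym_{n+1}. -/

import Mathlib

/-!
Characters of the diagonal torus are integer vectors `γ`, acting by `d ↦ ∏ dᵢ ^ γᵢ`, and the
characters trivial on `S` form the lattice `S^⊥`, which `W(S)` permutes. For the image `S` of a
monomial map with exponent matrix `A`, `S^⊥` is the kernel of `γ ↦ γ A` (as `Kˣ` has no
exponent), and conversely `S` is cut out by `S^⊥` (as `Kˣ` is divisible, hence an injective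
`ℤ`-module). So `S < T` forces a nonconstant `γ ∈ S^⊥`, and `S^⊥` is saturated.

If `W(S)` were `2`-transitive, summing the translates of `γ` over the stabilizer of a point `i`
with `(n+1) γᵢ ≠ ∑ γ` gives a vector of `S^⊥` that is constant off `i` but not at `i`;
subtracting a translate of it leaves `D (eᵢ - eⱼ) ∈ S^⊥` with `D ≠ 0`. By saturation
`eᵢ - eⱼ ∈ S^⊥`, i.e. `dᵢ = dⱼ` on `S`, contradicting `C_G(S) = T`.
-/

open Finset
open scoped Matrix

namespace Module.Baer

theorem exists_comp_eq_of_ker_le {Q M N : Type*} [AddCommGroup Q] [AddCommGroup M]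
    [AddCommGroup N] (hQ : Module.Baer ℤ Q) (f : M →+ N) (g : M →+ Q) (h : f.ker ≤ g.ker) :
    ∃ g' : N →+ Q, g'.comp f = g := by
  obtain ⟨g', hg'⟩ := hQ.extension_property_addMonoidHom (QuotientAddGroup.kerLift f)
    (QuotientAddGroup.kerLift_injective f) (QuotientAddGroup.lift f.ker g h)
  exact ⟨g', AddMonoidHom.ext fun x => DFunLike.congr_fun hg' (x : M ⧸ f.ker)⟩

end Module.Baer

namespace MulAction

variable {G α A : Type*} [Group G] [MulAction G α] [AddCommGroup A]

theorem sum_smul_smul [Fintype G] (f : α → A) (g : G) (x : α) :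
    ∑ h : G, f (h • g • x) = ∑ h : G, f (h • x) :=
  Fintype.sum_equiv (Equiv.mulRight g) _ _ fun h => by simp [mul_smul]

theorem sum_sum_smul [Fintype G] [Fintype α] (f : α → A) :
    ∑ x, ∑ h : G, f (h • x) = Fintype.card G • ∑ x, f x := by
  rw [sum_comm, ← card_univ, ← sum_const]
  exact sum_congr rfl fun h _ => Equiv.sum_comp (MulAction.toPerm h) f

variable [Finite G] [Finite α] [IsAddTorsionFree A] [IsMultiplyPretransitive G α 2]

theorem exists_mem_const_off_point {L : AddSubgroup (α → A)}
    (hL : ∀ g : G, ∀ γ ∈ L, (fun x => γ (g • x)) ∈ L) {γ : α → A} (hγ : γ ∈ L) {a b : α}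
    (hab : γ a ≠ γ b) : ∃ (i : α) (w : α → A) (c : A), w ∈ L ∧ (∀ l ≠ i, w l = c) ∧ w i ≠ c := by
  classical
  have := Fintype.ofFinite α
  have := Fintype.ofFinite G
  have : Nontrivial α := nontrivial_of_ne a b fun h => hab (congrArg γ h)
  obtain ⟨i, hi⟩ : ∃ i, Fintype.card α • γ i ≠ ∑ l, γ l := by
    by_contra! h
    exact hab (nsmul_right_injective Fintype.card_ne_zero ((h a).trans (h b).symm))
  obtain ⟨j, hj⟩ := exists_ne i
  let H := stabilizer G i
  let w : α → A := ∑ h : H, fun l => γ (h • l)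
  have hw : ∀ l, w l = ∑ h : H, γ (h • l) := fun l => sum_apply l _ _
  have hoff : ∀ l ≠ i, w l = w j := fun l hl => by
    obtain ⟨g, hgi, hgj⟩ := is_two_pretransitive_iff.1 ‹IsMultiplyPretransitive G α 2›
      hj.symm hl.symm
    rw [hw, hw, ← hgj]
    exact sum_smul_smul γ (⟨g, hgi⟩ : H) j
  -- If `w` were constant, its sum `|H| • ∑ γ` would equal `|α| • w i = |α| • |H| • γ i`.
  refine ⟨i, w, w j, sum_mem fun h _ => hL h γ hγ, hoff, fun hwi => hi ?_⟩
  have hwi' : w i = Fintype.card H • γ i := by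
    rw [hw, ← card_univ, ← sum_const]
    exact sum_congr rfl fun h _ => congrArg γ h.2
  have hsum : ∑ l, w l = Fintype.card H • ∑ l, γ l := by
    simp only [hw]
    exact sum_sum_smul γ
  have hconst : ∀ l, w l = w i := fun l => by
    rcases eq_or_ne l i with rfl | hl
    · rfl
    · rw [hoff l hl, hwi]
  rw [sum_congr rfl fun l _ => hconst l, sum_const, card_univ, hwi', smul_comm] at hsum
  exact nsmul_right_injective Fintype.card_ne_zero hsum

theorem exists_single_sub_single_mem [DecidableEq α] {L : AddSubgroup (α → A)}
    (hL : ∀ g : G, ∀ γ ∈ L, (fun x => γ (g • x)) ∈ L) {γ : α → A} (hγ : γ ∈ L) {a b : α}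
    (hab : γ a ≠ γ b) : ∃ i j, i ≠ j ∧ ∃ D ≠ 0, Pi.single i D - Pi.single j D ∈ L := by
  obtain ⟨i, w, c, hw, hoff, hwi⟩ := exists_mem_const_off_point hL hγ hab
  have : Nontrivial α := nontrivial_of_ne a b fun h => hab (congrArg γ h)
  obtain ⟨j, hj⟩ := exists_ne i
  have : IsPretransitive G α := isPretransitive_of_is_two_pretransitive
  obtain ⟨g, hg⟩ := exists_smul_eq G j i
  refine ⟨i, j, hj.symm, w i - c, sub_ne_zero.2 hwi, ?_⟩
  convert L.sub_mem hw (hL g w hw) using 1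
  funext l
  have hgl : g • l = i ↔ l = j := by rw [← hg, smul_left_cancel_iff]
  by_cases hli : l = i
  · subst hli
    simp [hoff _ (mt hgl.1 hj.symm), hj.symm]
  · by_cases hlj : l = j
    · subst hlj
      simp [hoff _ hli, hg, hli]
    · simp [hoff _ hli, hoff _ (mt hgl.1 hlj), hli, hlj]

end MulAction

namespace Equiv.Perm

variable {ι X : Type*}

def precompStabilizer [Finite ι] (S : Set (ι → X)) : Subgroup (Perm ι) :=
  let W : Submonoid (Perm ι) :=
    { carrier := {σ | ∀ d ∈ S, (fun i => d (σ i)) ∈ S}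
      mul_mem' := fun hσ hτ d hd => hτ _ (hσ d hd)
      one_mem' := fun _ hd => hd }
  { W with
    inv_mem' := fun {σ} hσ => by
      obtain ⟨k, hk⟩ := (isOfFinOrder_of_finite σ).mem_powers_iff_mem_zpowers.2
        (inv_mem (Subgroup.mem_zpowers σ))
      exact hk ▸ W.pow_mem hσ k }

end Equiv.Perm

theorem IsAlgClosed.exists_units_zpow_eq {K : Type*} [Field K] [IsAlgClosed K] (t : Kˣ) {n : ℤ}
    (hn : n ≠ 0) : ∃ z : Kˣ, z ^ n = t := by
  obtain ⟨z, hz⟩ := IsAlgClosed.exists_pow_nat_eq (t : K) (Int.natAbs_pos.2 hn)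
  have hz0 : z ≠ 0 := by
    rintro rfl
    exact t.ne_zero (by rw [← hz, zero_pow (Int.natAbs_pos.2 hn).ne'])
  have hu : Units.mk0 z hz0 ^ n.natAbs = t := Units.ext (by simpa using hz)
  rcases Int.natAbs_eq n with h | h
  · exact ⟨Units.mk0 z hz0, by rw [h, zpow_natCast, hu]⟩
  · exact ⟨(Units.mk0 z hz0)⁻¹, by rw [h, _root_.inv_zpow', neg_neg, zpow_natCast, hu]⟩

theorem IsAlgClosed.baer_additive_units (K : Type*) [Field K] [IsAlgClosed K] :
    Module.Baer ℤ (Additive Kˣ) :=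
  letI := divisibleByOfSMulRightSurj (Additive Kˣ) ℤ fun hn x =>
    (IsAlgClosed.exists_units_zpow_eq x.toMul hn).imp fun _ hz => congrArg Additive.ofMul hz
  Module.Baer.of_divisible _

theorem exponent_units_eq_zero_of_infinite (K : Type*) [Field K] [Infinite K] :
    Monoid.exponent Kˣ = 0 := by
  classical
  refine Monoid.exponent_eq_zero_iff_forall.2 fun k hk => ?_
  obtain ⟨x, hx⟩ :=
    Infinite.exists_notMem_finset (insert 0 (Polynomial.nthRoots k (1 : K)).toFinset)
  rw [Finset.mem_insert, Multiset.mem_toFinset, Polynomial.mem_nthRoots hk, not_or] at hx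
  exact ⟨Units.mk0 x hx.1, fun h => hx.2 (by simpa using congrArg Units.val h)⟩

namespace DiagonalTorus

variable {ι κ M : Type*} [Fintype ι] [Fintype κ] [CommGroup M]

def evalChar (d : ι → M) : (ι → ℤ) →+ Additive M where
  toFun γ := Additive.ofMul (∏ i, d i ^ γ i)
  map_zero' := by simp
  map_add' γ δ := by simp [add_smul, sum_add_distrib]

theorem evalChar_apply (d : ι → M) (γ : ι → ℤ) :
    evalChar d γ = Additive.ofMul (∏ i, d i ^ γ i) := rfl

def annihilator (S : Subgroup (ι → M)) : AddSubgroup (ι → ℤ) :=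
  ⨅ d ∈ S, (evalChar d).ker

theorem mem_annihilator {S : Subgroup (ι → M)} {γ : ι → ℤ} :
    γ ∈ annihilator S ↔ ∀ d ∈ S, ∏ i, d i ^ γ i = 1 := by
  simp only [annihilator, AddSubgroup.mem_iInf, AddMonoidHom.mem_ker, evalChar_apply,
    ofMul_eq_zero]

def monomialMap (A : Matrix ι κ ℤ) : (κ → M) →* (ι → M) where
  toFun x i := ∏ j, x j ^ A i j
  map_one' := by simp; rfl
  map_mul' x y := by ext i; simp [mul_zpow, prod_mul_distrib]

theorem prod_monomialMap_zpow (A : Matrix ι κ ℤ) (x : κ → M) (γ : ι → ℤ) :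
    ∏ i, monomialMap A x i ^ γ i = ∏ j, x j ^ (γ ᵥ* A) j := by
  apply Additive.ofMul.injective
  simp only [monomialMap, MonoidHom.coe_mk, OneHom.coe_mk, ofMul_prod, ofMul_zpow, smul_sum,
    smul_smul, Matrix.vecMul, dotProduct, sum_smul]
  exact sum_comm

theorem mem_annihilator_range_iff (hM : Monoid.exponent M = 0) (A : Matrix ι κ ℤ)
    {γ : ι → ℤ} : γ ∈ annihilator (monomialMap (M := M) A).range ↔ γ ᵥ* A = 0 := by
  classical
  simp only [mem_annihilator, MonoidHom.mem_range, forall_exists_index, forall_apply_eq_imp_iff,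
    prod_monomialMap_zpow]
  refine ⟨fun h => funext fun j => ?_, fun h x => by simp [h]⟩
  have hj : ∀ t : M, t ^ (γ ᵥ* A) j = 1 := fun t => by
    simpa [Pi.mulSingle_apply, apply_ite] using h (Pi.mulSingle j t)
  simpa [hM] using Group.exponent_dvd_iff_forall_zpow_eq_one.2 hj

theorem mem_range_monomialMap_of_forall (hM : Module.Baer ℤ (Additive M)) (A : Matrix ι κ ℤ)
    {d : ι → M} (hd : ∀ γ : ι → ℤ, γ ᵥ* A = 0 → ∏ i, d i ^ γ i = 1) :
    d ∈ (monomialMap A).range := by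
  classical
  obtain ⟨g, hg⟩ := hM.exists_comp_eq_of_ker_le (Matrix.vecMulLinear A).toAddMonoidHom (evalChar d)
    fun γ hγ => by
      rw [AddMonoidHom.mem_ker, evalChar_apply, ofMul_eq_zero]
      exact hd γ (by simpa using hγ)
  refine ⟨fun j => (g (Pi.single j 1)).toMul, funext fun i => ?_⟩
  have hi := DFunLike.congr_fun hg (Pi.single i 1)
  simp only [AddMonoidHom.coe_comp, Function.comp_apply, LinearMap.toAddMonoidHom_coe,
    Matrix.vecMulLinear_apply, Matrix.single_one_vecMul, evalChar_apply, Pi.single_apply,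
    apply_ite, zpow_one, zpow_zero, prod_ite_eq', mem_univ, if_true] at hi
  rw [← toMul_ofMul (d i), ← hi, ← univ_sum_single (A.row i), map_sum, toMul_sum]
  refine prod_congr rfl fun j _ => ?_
  rw [← toMul_zsmul, ← map_zsmul, ← Pi.single_smul', smul_eq_mul, mul_one]
  rfl

theorem mem_annihilator_range_of_zsmul_mem (hM : Monoid.exponent M = 0) (A : Matrix ι κ ℤ)
    {c : ℤ} (hc : c ≠ 0) {γ : ι → ℤ} (h : c • γ ∈ annihilator (monomialMap (M := M) A).range) :
    γ ∈ annihilator (monomialMap (M := M) A).range := by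
  rw [mem_annihilator_range_iff hM] at h ⊢
  rwa [Matrix.smul_vecMul, smul_eq_zero, or_iff_right hc] at h

theorem eq_of_single_sub_single_mem_annihilator [DecidableEq ι] (hM : Monoid.exponent M = 0)
    (A : Matrix ι κ ℤ) {i j : ι} {D : ℤ} (hD : D ≠ 0)
    (h : Pi.single i D - Pi.single j D ∈ annihilator (monomialMap (M := M) A).range)
    {d : ι → M} (hd : d ∈ (monomialMap A).range) : d i = d j := by
  have h1 : Pi.single i 1 - Pi.single j 1 ∈ annihilator (monomialMap (M := M) A).range :=
    mem_annihilator_range_of_zsmul_mem hM A hD (by simpa [smul_sub, ← Pi.single_smul'] using h)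
  have h2 := congrArg Additive.ofMul (mem_annihilator.1 h1 d hd)
  simp only [Pi.sub_apply, sub_smul, sum_sub_distrib, Pi.single_apply, ite_smul, one_smul,
    zero_smul, sum_ite_eq', mem_univ, if_true, ofMul_prod, ofMul_zpow, ofMul_one] at h2
  exact Additive.ofMul.injective (sub_eq_zero.1 h2)

theorem exists_nonconstant_mem_annihilator (hM : Module.Baer ℤ (Additive M))
    (A : Matrix ι κ ℤ) {d : ι → M} (hd : ∏ i, d i = 1) (hdA : d ∉ (monomialMap A).range) :
    ∃ γ ∈ annihilator (monomialMap (M := M) A).range, ∃ a b, γ a ≠ γ b := by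
  by_contra! h
  refine hdA (mem_range_monomialMap_of_forall hM A fun γ hγ => ?_)
  have hconst := h γ <| mem_annihilator.2 fun _ ⟨x, hx⟩ => by
    rw [← hx, prod_monomialMap_zpow, hγ]
    simp
  rcases isEmpty_or_nonempty ι with hι | ⟨⟨a⟩⟩
  · simp
  · rw [show γ = fun _ => γ a from funext fun i => hconst i a, prod_zpow, hd, one_zpow]

theorem comp_mem_annihilator {S : Subgroup (ι → M)} {σ : Equiv.Perm ι}
    (hσ : σ ∈ Equiv.Perm.precompStabilizer (S : Set (ι → M))) {γ : ι → ℤ}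
    (hγ : γ ∈ annihilator S) : (fun i => γ (σ i)) ∈ annihilator S := by
  rw [mem_annihilator] at hγ ⊢
  intro d hd
  rw [← hγ _ (inv_mem hσ d hd), ← Equiv.prod_comp σ (fun i => d (σ⁻¹ i) ^ γ i)]
  simp

end DiagonalTorus

open DiagonalTorus

theorem stmt_14_general {K : Type*} [Field K] [IsAlgClosed K] (n : ℕ)
    (T S : Subgroup (Fin (n + 1) → Kˣ))
    (hT : ∀ d : Fin (n + 1) → Kˣ, d ∈ T ↔ (∏ i, d i) = 1)
    (hsubtorus : ∃ (m : ℕ) (A : Fin (n + 1) → Fin m → ℤ),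
      ∀ d : Fin (n + 1) → Kˣ, d ∈ S ↔ ∃ x : Fin m → Kˣ, ∀ i, d i = ∏ j, x j ^ A i j)
    (hST : S < T)
    (hcent : ∀ i j : Fin (n + 1), i ≠ j → ∃ d ∈ S, d i ≠ d j) :
    ¬ ∀ (i₁ i₂ j₁ j₂ : Fin (n + 1)), i₁ ≠ i₂ → j₁ ≠ j₂ →
      ∃ σ : Equiv.Perm (Fin (n + 1)),
        (∀ d ∈ S, (fun i => d (σ i)) ∈ S) ∧ σ i₁ = j₁ ∧ σ i₂ = j₂ := by
  intro h2
  obtain ⟨m, A, hA⟩ := hsubtorus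
  obtain rfl : S = (monomialMap A).range := by
    ext d
    simp only [hA, MonoidHom.mem_range, funext_iff, eq_comm]
    rfl
  obtain ⟨d, hdT, hdS⟩ := SetLike.exists_of_lt hST
  obtain ⟨γ, hγ, a, b, hab⟩ := exists_nonconstant_mem_annihilator
    (IsAlgClosed.baer_additive_units K) A ((hT d).1 hdT) hdS
  let W := Equiv.Perm.precompStabilizer ((monomialMap (M := Kˣ) A).range : Set (Fin (n + 1) → Kˣ))
  have : MulAction.IsMultiplyPretransitive W (Fin (n + 1)) 2 :=
    MulAction.is_two_pretransitive_iff.2 fun hi hj => by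
      obtain ⟨σ, hσ, h₁, h₂⟩ := h2 _ _ _ _ hi hj
      exact ⟨⟨σ, hσ⟩, h₁, h₂⟩
  obtain ⟨i, j, hij, D, hD, hmem⟩ := MulAction.exists_single_sub_single_mem (G := W)
    (fun g _ hγ => comp_mem_annihilator g.2 hγ) hγ hab
  obtain ⟨d, hd, hne⟩ := hcent i j hij
  exact hne (eq_of_single_sub_single_mem_annihilator
    (exponent_units_eq_zero_of_infinite K) A hD hmem hd)

/-- Let `S` be a proper subtorus of the maximal torus
`T = {d : diagonal | ∏ d i = 1}` of `G = SL_{n+1}(K)`, with `C_G(S) = T`, and let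
`W(S) = N_G(S)/C_G(S)`, viewed as a subgroup of the Weyl group `Sym_{n+1}` — concretely,
the stabilizer of `S` in `Sym_{n+1}` acting on the diagonal torus by permuting coordinates.
Then `W(S)` is not `2`-transitive on `{1, …, n+1}`.

Here a subtorus is (concretely) the image of a morphism of tori given by an integer matrix
of exponents, and the condition `C_G(S) = T` is expressed by the weights of `S` on the
natural module being pairwise distinct: for all `i ≠ j` some `d ∈ S` has `d i ≠ d j`. -/
theorem stmt_14 {K : Type*} [Field K] [IsAlgClosed K] (n : ℕ) (hn : 1 ≤ n)
    (T S : Subgroup (Fin (n + 1) → Kˣ))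
    (hT : ∀ d : Fin (n + 1) → Kˣ, d ∈ T ↔ (∏ i, d i) = 1)
    (hsubtorus : ∃ (m : ℕ) (A : Fin (n + 1) → Fin m → ℤ),
      ∀ d : Fin (n + 1) → Kˣ, d ∈ S ↔ ∃ x : Fin m → Kˣ, ∀ i, d i = ∏ j, x j ^ A i j)
    (hST : S < T)
    (hcent : ∀ i j : Fin (n + 1), i ≠ j → ∃ d ∈ S, d i ≠ d j) :
    ¬ ∀ (i₁ i₂ j₁ j₂ : Fin (n + 1)), i₁ ≠ i₂ → j₁ ≠ j₂ →
      ∃ σ : Equiv.Perm (Fin (n + 1)),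
        (∀ d ∈ S, (fun i => d (σ i)) ∈ S) ∧ σ i₁ = j₁ ∧ σ i₂ = j₂ :=
  stmt_14_general n T S hT hsubtorus hST hcent
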